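/- arXiv:2310.03545 — 4 statements merged into one kernel-verified Lean document; each statement's English description precedes it below -/
import Mathlib

section
/- Let n ∈ ℕ, let p₁,…,pₙ be nonnegative reals with p₁+⋯+pₙ ≤ 1, set p_{n+1} := 1 − (p₁+⋯+pₙ), let v⁻₁,…,v⁻ₙ and v⁺₁,…,v⁺ₙ be real numbers, and let a⁻ < a⁺ be real numbers. For α ∈ [0,1] define Q⁺_α := inf{ t ∈ ℝ : Σ_{i : v⁺ᵢ ≤ t} pᵢ ≥ 1−α } (with inf ∅ = +∞) and Q⁻_α := sup{ t ∈ ℝ : Σ_{i : v⁻ᵢ ≥ t} pᵢ ≥ 1−α } (with sup ∅ = −∞). Then the set { α ∈ [0,1] : a⁻ ≤ Q⁻_α and Q⁺_α ≤ a⁺ } is nonempty and has a minimum, and this minimum equals max( p_{n+1} + Σ_{i : v⁻ᵢ < a⁻} pᵢ , p_{n+1} + Σ_{i : v⁺ᵢ > a⁺} pᵢ ) = max( 1 − Σ_{i : v⁻ᵢ ≥ a⁻} pᵢ , 1 − Σ_{i : v⁺ᵢ ≤ a⁺} pᵢ ). -/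
/-!
The weighted counts `t ↦ ∑_{v⁺ᵢ ≤ t} pᵢ` and `t ↦ ∑_{v⁻ᵢ ≥ t} pᵢ` are monotone (resp. antitone)
and upper semicontinuous, so their superlevel sets are closed half-lines. Hence
`Q⁺_α ≤ a⁺ ↔ 1 - α ≤ ∑_{v⁺ᵢ ≤ a⁺} pᵢ` and `a⁻ ≤ Q⁻_α ↔ 1 - α ≤ ∑_{v⁻ᵢ ≥ a⁻} pᵢ`: the admissible
levels are exactly those above `max (1 - ∑_{v⁻ᵢ ≥ a⁻} pᵢ) (1 - ∑_{v⁺ᵢ ≤ a⁺} pᵢ)`, and the other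
closed form agrees with it because sums over complementary index sets add up to `∑ pᵢ`.
-/

open scoped BigOperators

/-- Weighted upper quantile `Q⁺_α` (in `EReal`, with `inf ∅ = +∞`). -/
noncomputable def wQplus {n : ℕ} (p : Fin n → ℝ) (vp : Fin n → ℝ) (α : ℝ) : EReal :=
  sInf ((fun t : ℝ => (t : EReal)) '' {t : ℝ | 1 - α ≤ ∑ i, if vp i ≤ t then p i else 0})

/-- Weighted lower quantile `Q⁻_α` (in `EReal`, with `sup ∅ = -∞`). -/
noncomputable def wQminus {n : ℕ} (p : Fin n → ℝ) (vm : Fin n → ℝ) (α : ℝ) : EReal :=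
  sSup ((fun t : ℝ => (t : EReal)) '' {t : ℝ | 1 - α ≤ ∑ i, if t ≤ vm i then p i else 0})

open Set

namespace EReal

theorem sInf_image_coe_le_iff {S : Set ℝ} (hS : IsClosed S) (hup : IsUpperSet S) (a : ℝ) :
    sInf (((↑) : ℝ → EReal) '' S) ≤ a ↔ a ∈ S := by
  refine ⟨fun h => ?_, fun ha => sInf_le (mem_image_of_mem _ ha)⟩
  have hIoi : Ioi a ⊆ S := fun b hb => by
    obtain ⟨_, ⟨t, ht, rfl⟩, htb⟩ := sInf_lt_iff.1 (h.trans_lt (EReal.coe_lt_coe_iff.2 hb))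
    exact hup (EReal.coe_lt_coe_iff.1 htb).le ht
  exact hS.closure_subset_iff.2 hIoi (by rw [closure_Ioi]; exact self_mem_Ici)

theorem le_sSup_image_coe_iff {S : Set ℝ} (hS : IsClosed S) (hlow : IsLowerSet S) (a : ℝ) :
    (a : EReal) ≤ sSup (((↑) : ℝ → EReal) '' S) ↔ a ∈ S := by
  refine ⟨fun h => ?_, fun ha => le_sSup (mem_image_of_mem _ ha)⟩
  have hIio : Iio a ⊆ S := fun b hb => by
    obtain ⟨_, ⟨t, ht, rfl⟩, hbt⟩ := lt_sSup_iff.1 ((EReal.coe_lt_coe_iff.2 hb).trans_le h)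
    exact hlow (EReal.coe_lt_coe_iff.1 hbt).le ht
  exact hS.closure_subset_iff.2 hIio (by rw [closure_Iio]; exact self_mem_Iic)

end EReal

section WeightedCount

variable {ι : Type*} [Fintype ι]

theorem sum_ite_lt_add_sum_ite_le (p : ι → ℝ) (x y : ι → ℝ) :
    ((∑ i, if x i < y i then p i else 0) + ∑ i, if y i ≤ x i then p i else 0) = ∑ i, p i := by
  simp only [← Finset.sum_filter, ← not_lt]
  exact Finset.sum_filter_add_sum_filter_not _ _ _

variable {p : ι → ℝ}

theorem upperSemicontinuous_sum_ite_le (hp : ∀ i, 0 ≤ p i) (v : ι → ℝ) :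
    UpperSemicontinuous fun t : ℝ => ∑ i, if v i ≤ t then p i else 0 :=
  upperSemicontinuous_sum fun i _ => by
    have h := (isClosed_Ici (a := v i)).upperSemicontinuous_indicator (hp i)
    unfold indicator at h
    simpa only [mem_Ici] using h

theorem upperSemicontinuous_sum_ite_ge (hp : ∀ i, 0 ≤ p i) (v : ι → ℝ) :
    UpperSemicontinuous fun t : ℝ => ∑ i, if t ≤ v i then p i else 0 :=
  upperSemicontinuous_sum fun i _ => by
    have h := (isClosed_Iic (a := v i)).upperSemicontinuous_indicator (hp i)
    unfold indicator at h
    simpa only [mem_Iic] using h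

theorem monotone_sum_ite_le (hp : ∀ i, 0 ≤ p i) (v : ι → ℝ) :
    Monotone fun t : ℝ => ∑ i, if v i ≤ t then p i else 0 :=
  fun _ _ hst => Finset.sum_le_sum fun i _ => by
    split_ifs with hs ht
    exacts [le_rfl, absurd (hs.trans hst) ht, hp i, le_rfl]

theorem antitone_sum_ite_ge (hp : ∀ i, 0 ≤ p i) (v : ι → ℝ) :
    Antitone fun t : ℝ => ∑ i, if t ≤ v i then p i else 0 :=
  fun _ _ hst => Finset.sum_le_sum fun i _ => by
    split_ifs with hs ht
    exacts [le_rfl, absurd (hst.trans hs) ht, hp i, le_rfl]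

end WeightedCount

variable {n : ℕ} {p : Fin n → ℝ}

theorem wQplus_le_coe_iff (hp : ∀ i, 0 ≤ p i) (vp : Fin n → ℝ) (α a : ℝ) :
    wQplus p vp α ≤ a ↔ 1 - α ≤ ∑ i, if vp i ≤ a then p i else 0 :=
  EReal.sInf_image_coe_le_iff ((upperSemicontinuous_sum_ite_le hp vp).isClosed_preimage _)
    (fun _ _ hst h => h.trans (monotone_sum_ite_le hp vp hst)) a

theorem coe_le_wQminus_iff (hp : ∀ i, 0 ≤ p i) (vm : Fin n → ℝ) (α a : ℝ) :
    a ≤ wQminus p vm α ↔ 1 - α ≤ ∑ i, if a ≤ vm i then p i else 0 :=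
  EReal.le_sSup_image_coe_iff ((upperSemicontinuous_sum_ite_ge hp vm).isClosed_preimage _)
    (fun _ _ hst h => h.trans (antitone_sum_ite_ge hp vm hst)) a

theorem minimal_miscoverage_closed_form_general {n : ℕ} (p : Fin n → ℝ) (hp : ∀ i, 0 ≤ p i)
    (hps : ∑ i, p i ≤ 1) (vm vp : Fin n → ℝ) (am ap : ℝ) :
    IsLeast {α : ℝ | α ∈ Set.Icc (0 : ℝ) 1 ∧ (am : EReal) ≤ wQminus p vm α ∧
        wQplus p vp α ≤ (ap : EReal)}
      (max ((1 - ∑ i, p i) + ∑ i, if vm i < am then p i else 0)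
           ((1 - ∑ i, p i) + ∑ i, if ap < vp i then p i else 0)) ∧
    max ((1 - ∑ i, p i) + ∑ i, if vm i < am then p i else 0)
        ((1 - ∑ i, p i) + ∑ i, if ap < vp i then p i else 0) =
      max (1 - ∑ i, if am ≤ vm i then p i else 0)
          (1 - ∑ i, if vp i ≤ ap then p i else 0) := by
  set Sm := ∑ i, if am ≤ vm i then p i else 0
  set Sp := ∑ i, if vp i ≤ ap then p i else 0
  have hsplit_m := sum_ite_lt_add_sum_ite_le p vm fun _ => am
  have hsplit_p := sum_ite_lt_add_sum_ite_le p (fun _ => ap) vp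
  have hsum_nonneg : ∀ P : Fin n → Prop, [DecidablePred P] → 0 ≤ ∑ i, if P i then p i else 0 :=
    fun _ _ => Finset.sum_nonneg fun i _ => ite_nonneg (hp i) le_rfl
  have hlt_nonneg := hsum_nonneg fun i => vm i < am
  have hSm_nonneg := hsum_nonneg fun i => am ≤ vm i
  have hSp_nonneg := hsum_nonneg fun i => vp i ≤ ap
  have hclosed : ∀ α, (am ≤ wQminus p vm α ∧ wQplus p vp α ≤ ap) ↔ max (1 - Sm) (1 - Sp) ≤ α := by
    intro α
    rw [coe_le_wQminus_iff hp, wQplus_le_coe_iff hp, max_le_iff]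
    constructor <;> rintro ⟨h₁, h₂⟩ <;> constructor <;> linarith
  have hmax : max ((1 - ∑ i, p i) + ∑ i, if vm i < am then p i else 0)
      ((1 - ∑ i, p i) + ∑ i, if ap < vp i then p i else 0) = max (1 - Sm) (1 - Sp) := by
    congr 1 <;> linarith
  rw [hmax]
  refine ⟨⟨⟨⟨le_max_of_le_left (by linarith), max_le (by linarith) (by linarith)⟩,
    (hclosed _).2 le_rfl⟩, fun α hα => (hclosed α).1 hα.2⟩, rfl⟩

/-- Closed-form solution for the minimal miscoverage level: the set of levels
`α ∈ [0,1]` for which the weighted conformal interval `[Q⁻_α, Q⁺_α]` is contained in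
the pre-defined interval `[a⁻, a⁺]` is nonempty and has a least element, namely
`max(p_{n+1} + Σ_{i : v⁻ᵢ < a⁻} pᵢ, p_{n+1} + Σ_{i : v⁺ᵢ > a⁺} pᵢ)` where
`p_{n+1} = 1 - Σᵢ pᵢ`; moreover this value equals
`max(1 - Σ_{i : v⁻ᵢ ≥ a⁻} pᵢ, 1 - Σ_{i : v⁺ᵢ ≤ a⁺} pᵢ)`. -/
theorem minimal_miscoverage_closed_form {n : ℕ} (p : Fin n → ℝ) (hp : ∀ i, 0 ≤ p i)
    (hps : ∑ i, p i ≤ 1) (vm vp : Fin n → ℝ) (am ap : ℝ) (ha : am < ap) :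
    IsLeast {α : ℝ | α ∈ Set.Icc (0 : ℝ) 1 ∧ (am : EReal) ≤ wQminus p vm α ∧
        wQplus p vp α ≤ (ap : EReal)}
      (max ((1 - ∑ i, p i) + ∑ i, if vm i < am then p i else 0)
           ((1 - ∑ i, p i) + ∑ i, if ap < vp i then p i else 0)) ∧
    max ((1 - ∑ i, p i) + ∑ i, if vm i < am then p i else 0)
        ((1 - ∑ i, p i) + ∑ i, if ap < vp i then p i else 0) =
      max (1 - ∑ i, if am ≤ vm i then p i else 0)
          (1 - ∑ i, if vp i ≤ ap then p i else 0) :=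
  minimal_miscoverage_closed_form_general p hp hps vm vp am ap
end

section
/- Let n ≥ 1 and α ∈ (0,1), and set k := ⌈(1−α)(n+1)⌉. Let μ be a probability measure on the space of functions v : Fin (n+1) → ℝ that is exchangeable, i.e., for every permutation σ of Fin (n+1), the pushforward of μ under v ↦ v ∘ σ equals μ. For v : Fin (n+1) → ℝ, let q(v) denote the k-th smallest value among v(0),…,v(n−1) (the first n coordinates), with the convention q(v) = +∞ if k > n. Then μ{ v : v(n) ≤ q(v) } ≥ 1 − α, where v(n) denotes the last coordinate. -/
/-!
Call the strict rank of coordinate `i` of `v` the number of coordinates strictly below `v i`.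
The coordinate in sorted position `p` has strict rank at most `p`, so for every `v` at least `k`
of the `n + 1` coordinates have strict rank `< k`, and the probabilities of the events
`{strict rank of i < k}` sum to at least `k`. Exchangeability makes these `n + 1` events
equiprobable, hence the last coordinate has strict rank `< k` with probability at least
`k / (n + 1) ≥ 1 - α`; and its strict rank is `< k` exactly when it does not exceed the `k`-th
smallest of the other `n` coordinates.
-/
open MeasureTheory

/-- The `k`-th smallest value (1-indexed) among `v 0, …, v (n-1)`, as an element of
`EReal`, with the convention that it is `+∞` when `k > n`. -/
noncomputable def kthSmallestE {n : ℕ} (hn : 1 ≤ n) (v : Fin n → ℝ) (k : ℕ) : EReal :=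
  if h : k ≤ n then ((v (Tuple.sort v ⟨k - 1, by omega⟩) : ℝ) : EReal) else ⊤

open Finset

lemma card_filter_comp_equiv {ι κ : Type*} [Fintype ι] [Fintype κ] (e : ι ≃ κ)
    (p : κ → Prop) [DecidablePred p] : #{j | p (e j)} = #{j | p j} := by
  simp only [card_filter]
  exact e.sum_comp fun j => if p j then 1 else 0

section LinearOrder

variable {α : Type*} [LinearOrder α]

lemma Monotone.le_apply_iff_card_filter_lt_le {N : ℕ} {u : Fin N → α} (hu : Monotone u)
    (c : α) (j : Fin N) : c ≤ u j ↔ #{i | u i < c} ≤ j := by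
  rw [← not_lt, ← not_lt, Fin.lt_card_filter_univ_iff_apply_of_imp]
  exact fun i j hji hi => (hu hji).trans_lt hi

lemma le_apply_sort_iff_card_filter_lt_lt {N k : ℕ} (w : Fin N → α) (hk : 1 ≤ k)
    (hkN : k ≤ N) (c : α) :
    c ≤ w (Tuple.sort w ⟨k - 1, by omega⟩) ↔ #{i | w i < c} < k := by
  have h := (Tuple.monotone_sort w).le_apply_iff_card_filter_lt_le c ⟨k - 1, by omega⟩
  simp only [Function.comp_apply, card_filter_comp_equiv _ (fun i => w i < c)] at h
  rw [h]
  omega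

def strictRank {N : ℕ} (v : Fin N → α) (i : Fin N) : ℕ :=
  #{j | v j < v i}

lemma strictRank_comp_perm {N : ℕ} (v : Fin N → α) (σ : Equiv.Perm (Fin N)) (i : Fin N) :
    strictRank (v ∘ σ) i = strictRank v (σ i) :=
  card_filter_comp_equiv σ (fun j => v j < v (σ i))

lemma strictRank_sort_le {N : ℕ} (v : Fin N → α) (p : Fin N) :
    strictRank v (Tuple.sort v p) ≤ p := by
  rw [← strictRank_comp_perm]
  exact ((Tuple.monotone_sort v).le_apply_iff_card_filter_lt_le _ p).1 le_rfl

lemma le_card_filter_strictRank_lt {N k : ℕ} (v : Fin N → α) (hk : k ≤ N) :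
    k ≤ #{i | strictRank v i < k} := by
  calc k = #(univ : Finset (Fin k)) := by simp
    _ ≤ #{i | strictRank v i < k} := by
      refine card_le_card_of_injOn (fun p => Tuple.sort v (Fin.castLE hk p)) ?_ ?_
      · intro p _
        simpa using (strictRank_sort_le v _).trans_lt p.isLt
      · intro p _ q _ h
        exact Fin.castLE_injective hk ((Tuple.sort v).injective h)

lemma strictRank_last {n : ℕ} (v : Fin (n + 1) → α) :
    strictRank v (Fin.last n) = #{i : Fin n | v i.castSucc < v (Fin.last n)} := by
  rw [strictRank, card_filter, card_filter, Fin.sum_univ_castSucc]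
  simp

end LinearOrder

lemma natCast_mul_measure_univ_le_sum {Ω ι : Type*} [MeasurableSpace Ω] [Fintype ι]
    (μ : Measure Ω) {B : ι → Set Ω} [∀ ω, DecidablePred (ω ∈ B ·)]
    (hB : ∀ i, MeasurableSet (B i)) {k : ℕ} (hk : ∀ ω, k ≤ #{i | ω ∈ B i}) :
    k * μ Set.univ ≤ ∑ i, μ (B i) := by
  calc (k : ENNReal) * μ Set.univ = ∫⁻ _, (k : ENNReal) ∂μ := (lintegral_const _).symm
    _ ≤ ∫⁻ ω, ∑ i, (B i).indicator 1 ω ∂μ := lintegral_mono fun ω => by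
        simpa [Set.indicator_apply, ← card_filter] using hk ω
    _ = ∑ i, μ (B i) := by
        rw [lintegral_finsetSum _ fun i _ => measurable_one.indicator (hB i)]
        simp only [lintegral_indicator_one (hB _)]

lemma measurableSet_strictRank_lt {N : ℕ} (i : Fin N) (k : ℕ) :
    MeasurableSet {v : Fin N → ℝ | strictRank v i < k} := by
  have : Measurable fun v : Fin N → ℝ => strictRank v i := by
    simp only [strictRank, card_filter]
    exact Finset.measurable_sum _ fun j _ =>
      Measurable.ite (measurableSet_lt (measurable_pi_apply j) (measurable_pi_apply i))
        measurable_const measurable_const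
  exact this measurableSet_Iio

lemma measure_strictRank_lt_eq {N : ℕ} {μ : Measure (Fin N → ℝ)}
    (hμ : ∀ σ : Equiv.Perm (Fin N), μ.map (· ∘ σ) = μ) (k : ℕ) (i j : Fin N) :
    μ {v | strictRank v i < k} = μ {v | strictRank v j < k} := by
  set σ := Equiv.swap i j
  calc μ {v | strictRank v i < k} = μ ((· ∘ σ) ⁻¹' {v | strictRank v j < k}) := by
        congr 1; ext v; simp [σ, strictRank_comp_perm]
    _ = μ.map (· ∘ σ) {v | strictRank v j < k} :=
        (Measure.map_apply (by fun_prop) (measurableSet_strictRank_lt j k)).symm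
    _ = μ {v | strictRank v j < k} := by rw [hμ]

lemma natCast_le_mul_measure_strictRank_lt {N k : ℕ} (μ : Measure (Fin N → ℝ))
    [IsProbabilityMeasure μ] (hμ : ∀ σ : Equiv.Perm (Fin N), μ.map (· ∘ σ) = μ)
    (hk : k ≤ N) (i : Fin N) : (k : ENNReal) ≤ N * μ {v | strictRank v i < k} := by
  have h := natCast_mul_measure_univ_le_sum μ (fun j => measurableSet_strictRank_lt j k)
    (le_card_filter_strictRank_lt · hk)
  simpa [measure_strictRank_lt_eq hμ k _ i] using h

lemma ENNReal.ofReal_le_of_natCast_le_mul {p : ℝ} {N k : ℕ} {m : ENNReal} (hN : N ≠ 0)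
    (hp : N * p ≤ k) (h : (k : ENNReal) ≤ N * m) : ENNReal.ofReal p ≤ m := by
  rw [← ENNReal.mul_le_mul_iff_right (Nat.cast_ne_zero.2 hN) (ENNReal.natCast_ne_top N)]
  calc (N : ENNReal) * ENNReal.ofReal p = ENNReal.ofReal (N * p) := by
        rw [ENNReal.ofReal_mul (Nat.cast_nonneg N), ENNReal.ofReal_natCast]
    _ ≤ k := by simpa using ENNReal.ofReal_le_ofReal hp
    _ ≤ N * m := h

lemma coe_le_kthSmallestE_iff {n k : ℕ} (hn : 1 ≤ n) (hk : 1 ≤ k) (w : Fin n → ℝ) (c : ℝ) :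
    (c : EReal) ≤ kthSmallestE hn w k ↔ (k ≤ n → #{i | w i < c} < k) := by
  unfold kthSmallestE
  split_ifs with hkn
  · simp [EReal.coe_le_coe_iff, le_apply_sort_iff_card_filter_lt_lt w hk hkn, hkn]
  · simp [hkn]

/-- Core quantile lemma behind split-conformal coverage: if `μ` is an exchangeable
probability measure on `Fin (n+1) → ℝ` and `q(v)` is the `⌈(1-α)(n+1)⌉`-th smallest
value among the first `n` coordinates of `v` (`+∞` if `⌈(1-α)(n+1)⌉ > n`), then the
last coordinate satisfies `v(n) ≤ q(v)` with probability at least `1 - α`. -/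
theorem exchangeable_rank_quantile {n : ℕ} (hn : 1 ≤ n) (α : ℝ) (hα : α ∈ Set.Ioo (0 : ℝ) 1)
    (μ : Measure (Fin (n + 1) → ℝ)) [IsProbabilityMeasure μ]
    (hexch : ∀ σ : Equiv.Perm (Fin (n + 1)), Measure.map (fun v => v ∘ σ) μ = μ) :
    ENNReal.ofReal (1 - α) ≤
      μ {v : Fin (n + 1) → ℝ |
          ((v (Fin.last n) : ℝ) : EReal) ≤
            kthSmallestE hn (fun i : Fin n => v i.castSucc) ⌈(1 - α) * (n + 1)⌉₊} := by
  obtain ⟨hα0, hα1⟩ := hα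
  set k := ⌈(1 - α) * (n + 1)⌉₊
  have hk_pos : 1 ≤ k := Nat.one_le_iff_ne_zero.2 (Nat.ceil_pos.2 (by positivity)).ne'
  have hk_le : k ≤ n + 1 := Nat.ceil_le.2 (by push_cast; nlinarith)
  simp only [coe_le_kthSmallestE_iff hn hk_pos, ← strictRank_last]
  by_cases hkn : k ≤ n
  · simp only [hkn, forall_const]
    exact ENNReal.ofReal_le_of_natCast_le_mul n.succ_ne_zero
      (by push_cast; linarith [Nat.le_ceil ((1 - α) * (n + 1))])
      (natCast_le_mul_measure_strictRank_lt μ hexch hk_le (Fin.last n))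
  · simp [hkn, hα0.le]
end

section
/- Let n ≥ 1 and α ∈ (0,1), and let (X₁,Y₁), …, (Xₙ,Yₙ), (X_{n+1},Y_{n+1}) be i.i.d. random pairs taking values in ℝ^d × ℝ. Let μ : ℝ^d → ℝ be a fixed measurable function (a model trained independently of these pairs), and define the conformity scores Sᵢ := |Yᵢ − μ(Xᵢ)| for i = 1,…,n. Let q̂ be the ⌈(1−α)(n+1)⌉-th smallest value among S₁,…,Sₙ, with the convention q̂ = +∞ if ⌈(1−α)(n+1)⌉ > n. Then ℙ( Y_{n+1} ∈ [ μ(X_{n+1}) − q̂, μ(X_{n+1}) + q̂ ] ) ≥ 1 − α. -/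
open MeasureTheory ProbabilityTheory

lemma count_lt_perm {n : ℕ} (v : Fin n → ℝ) (σ : Equiv.Perm (Fin n)) (t : ℝ) :
    (Finset.filter (fun i => v (σ i) < t) Finset.univ).card
      = (Finset.filter (fun i => v i < t) Finset.univ).card := by
  refine Finset.card_equiv σ fun i => ?_
  simp

lemma card_val_lt_le {n r : ℕ} :
    (Finset.filter (fun i : Fin n => (i : ℕ) < r) Finset.univ).card ≤ r := by
  have := Finset.card_le_card_of_injOn (fun i : Fin n => (i : ℕ))
    (s := Finset.filter (fun i : Fin n => (i : ℕ) < r) Finset.univ) (t := Finset.range r)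
    (by intro a ha; simp only [Finset.mem_coe, Finset.mem_filter] at ha; simp [ha.2])
    (fun a _ b _ hab => Fin.val_injective hab)
  simpa using this

lemma le_kth_iff {n : ℕ} (v : Fin n → ℝ) {k : ℕ} (hk1 : 1 ≤ k) (hkn : k ≤ n) (t : ℝ) :
    t ≤ v (Tuple.sort v ⟨k - 1, by omega⟩) ↔
      (Finset.filter (fun i : Fin n => v i < t) Finset.univ).card < k := by
  set σ := Tuple.sort v with hσ
  set k1 : Fin n := ⟨k - 1, by omega⟩ with hk1def
  have hmono : Monotone (v ∘ σ) := Tuple.monotone_sort v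
  have hcard : (Finset.filter (fun i : Fin n => v i < t) Finset.univ).card
      = (Finset.filter (fun i : Fin n => v (σ i) < t) Finset.univ).card :=
    (count_lt_perm v σ t).symm
  rw [hcard]
  constructor
  · intro h
    have hsub : Finset.filter (fun i : Fin n => v (σ i) < t) Finset.univ
        ⊆ Finset.filter (fun i : Fin n => (i : ℕ) < k - 1) Finset.univ := by
      intro i hi
      simp only [Finset.mem_filter, Finset.mem_univ, true_and] at hi ⊢
      by_contra hik
      push_neg at hik
      have hle : k1 ≤ i := by rw [Fin.le_def]; exact hik
      have : v (σ k1) ≤ v (σ i) := hmono hle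
      linarith
    have := (Finset.card_le_card hsub).trans (card_val_lt_le (r := k - 1))
    omega
  · intro h
    by_contra hlt
    push_neg at hlt
    have hsub : Finset.filter (fun i : Fin n => (i : ℕ) < k) Finset.univ
        ⊆ Finset.filter (fun i : Fin n => v (σ i) < t) Finset.univ := by
      intro i hi
      simp only [Finset.mem_filter, Finset.mem_univ, true_and] at hi ⊢
      have hle : i ≤ k1 := by rw [Fin.le_def]; simp only [hk1def]; omega
      have : v (σ i) ≤ v (σ k1) := hmono hle
      linarith
    have h2 : k ≤ (Finset.filter (fun i : Fin n => (i : ℕ) < k) Finset.univ).card := by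
      have := Finset.card_le_card_of_injOn (fun i : Fin k => Fin.castLE hkn i)
        (s := Finset.univ)
        (t := Finset.filter (fun i : Fin n => (i : ℕ) < k) Finset.univ)
        (by intro a _; simp only [Finset.mem_coe, Finset.mem_filter, Finset.mem_univ, true_and,
              Fin.coe_castLE]; exact a.isLt)
        (fun a _ b _ hab => Fin.castLE_injective hkn hab)
      simpa using this
    have := h2.trans (Finset.card_le_card hsub)
    omega

/-- Among `n+1` values, at least `k` indices `j` have fewer than `k` values strictly
below them. -/
lemma count_low_rank {n k : ℕ} (hk1 : 1 ≤ k) (hk : k ≤ n + 1) (s : Fin (n + 1) → ℝ) :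
    k ≤ (Finset.filter (fun j : Fin (n + 1) =>
        (Finset.filter (fun i : Fin (n + 1) => s i < s j) Finset.univ).card ≤ k - 1)
      Finset.univ).card := by
  set τ := Tuple.sort s with hτ
  have hmono : Monotone (s ∘ τ) := Tuple.monotone_sort s
  have key : ∀ j : Fin k,
      (Finset.filter (fun i : Fin (n + 1) => s i < s (τ (Fin.castLE hk j))) Finset.univ).card
        ≤ k - 1 := by
    intro j
    have hre : (Finset.filter (fun i : Fin (n + 1) => s i < s (τ (Fin.castLE hk j)))
          Finset.univ).card
        = (Finset.filter (fun i : Fin (n + 1) => s (τ i) < s (τ (Fin.castLE hk j)))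
          Finset.univ).card :=
      (count_lt_perm s τ _).symm
    rw [hre]
    have hsub : Finset.filter (fun i : Fin (n + 1) => s (τ i) < s (τ (Fin.castLE hk j)))
          Finset.univ
        ⊆ Finset.filter (fun i : Fin (n + 1) => (i : ℕ) < (j : ℕ)) Finset.univ := by
      intro i hi
      simp only [Finset.mem_filter, Finset.mem_univ, true_and] at hi ⊢
      by_contra hij
      push_neg at hij
      have hle : Fin.castLE hk j ≤ i := by
        rw [Fin.le_def]; simpa [Fin.coe_castLE] using hij
      have : s (τ (Fin.castLE hk j)) ≤ s (τ i) := hmono hle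
      linarith
    have hj : (j : ℕ) ≤ k - 1 := by have := j.isLt; omega
    exact le_trans (le_trans (Finset.card_le_card hsub) card_val_lt_le) hj
  have := Finset.card_le_card_of_injOn (fun j : Fin k => τ (Fin.castLE hk j))
    (s := Finset.univ)
    (t := Finset.filter (fun j : Fin (n + 1) =>
        (Finset.filter (fun i : Fin (n + 1) => s i < s j) Finset.univ).card ≤ k - 1)
      Finset.univ)
    (by intro j _; simp only [Finset.mem_coe, Finset.mem_filter, Finset.mem_univ, true_and]; exact key j)
    (fun a _ b _ hab => Fin.castLE_injective hk (τ.injective hab))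
  simpa using this

lemma map_pi_of_iIndep {n : ℕ} {Ω : Type*} [MeasurableSpace Ω] {P : Measure Ω}
    [IsProbabilityMeasure P] (S : Fin n → Ω → ℝ) (hS : ∀ i, Measurable (S i))
    (hind : iIndepFun S P) :
    Measure.map (fun ω i => S i ω) P = Measure.pi (fun i => Measure.map (S i) P) := by
  have hinst : ∀ i, IsProbabilityMeasure (Measure.map (S i) P) :=
    fun i => Measure.isProbabilityMeasure_map (hS i).aemeasurable
  refine (Measure.pi_eq fun s hs => ?_).symm
  rw [Measure.map_apply (measurable_pi_lambda _ hS) (MeasurableSet.univ_pi hs)]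
  have hpre : (fun ω i => S i ω) ⁻¹' Set.pi Set.univ s = ⋂ i, S i ⁻¹' s i := by
    ext ω
    simp only [Set.mem_preimage, Set.mem_pi, Set.mem_univ, true_implies, Set.mem_iInter]
  rw [hpre, hind.meas_iInter (fun i => ⟨s i, hs i, rfl⟩)]
  exact Finset.prod_congr rfl fun i _ => (Measure.map_apply (hS i) (hs i)).symm

lemma pi_map_perm {n : ℕ} (m : Measure ℝ) [IsProbabilityMeasure m] (σ : Equiv.Perm (Fin n)) :
    Measure.map (fun s : Fin n → ℝ => s ∘ σ) (Measure.pi fun _ : Fin n => m)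
      = Measure.pi fun _ : Fin n => m := by
  have hT : Measurable (fun s : Fin n → ℝ => s ∘ σ) :=
    measurable_pi_lambda _ fun i => measurable_pi_apply (σ i)
  refine (Measure.pi_eq fun u hu => ?_).symm
  rw [Measure.map_apply hT (MeasurableSet.univ_pi hu)]
  have hpre : (fun s : Fin n → ℝ => s ∘ σ) ⁻¹' Set.pi Set.univ u
      = Set.pi Set.univ (fun j => u (σ.symm j)) := by
    ext x
    simp only [Set.mem_preimage, Set.mem_pi, Set.mem_univ, true_implies, Function.comp]
    constructor
    · intro h j
      have := h (σ.symm j)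
      rwa [Equiv.apply_symm_apply] at this
    · intro h i
      have := h (σ i)
      rwa [Equiv.symm_apply_apply] at this
  rw [hpre, Measure.pi_pi]
  exact Fintype.prod_equiv σ.symm _ _ fun j => rfl

lemma measurable_rank_set {n k : ℕ} (j : Fin (n + 1)) :
    MeasurableSet {s : Fin (n + 1) → ℝ |
      (Finset.filter (fun i : Fin (n + 1) => s i < s j) Finset.univ).card ≤ k - 1} := by
  have hN : Measurable (fun s : Fin (n + 1) → ℝ =>
      ∑ i : Fin (n + 1), if s i < s j then 1 else 0 : (Fin (n + 1) → ℝ) → ℕ) := by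
    refine Finset.measurable_sum _ fun i _ => Measurable.ite ?_ measurable_const measurable_const
    exact measurableSet_lt (measurable_pi_apply i) (measurable_pi_apply j)
  have heq : {s : Fin (n + 1) → ℝ |
        (Finset.filter (fun i : Fin (n + 1) => s i < s j) Finset.univ).card ≤ k - 1}
      = (fun s : Fin (n + 1) → ℝ => ∑ i : Fin (n + 1), if s i < s j then 1 else 0) ⁻¹'
        (Set.Iic (k - 1)) := by
    ext s
    rw [Set.mem_setOf_eq, Set.mem_preimage, Set.mem_Iic, Finset.card_filter]
  rw [heq]
  exact hN (measurableSet_Iic)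

lemma pi_rank_bound {n k : ℕ} (hk1 : 1 ≤ k) (hk : k ≤ n + 1) (m : Measure ℝ)
    [IsProbabilityMeasure m] :
    (k : ENNReal) ≤ (n + 1) * Measure.pi (fun _ : Fin (n + 1) => m)
      {s | (Finset.filter (fun i : Fin (n + 1) => s i < s (Fin.last n)) Finset.univ).card
        ≤ k - 1} := by
  classical
  set ν := Measure.pi (fun _ : Fin (n + 1) => m) with hν
  have : IsProbabilityMeasure ν := by infer_instance
  set A : Fin (n + 1) → Set (Fin (n + 1) → ℝ) :=
    fun j => {s | (Finset.filter (fun i : Fin (n + 1) => s i < s j) Finset.univ).card ≤ k - 1}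
    with hA
  have hAmeas : ∀ j, MeasurableSet (A j) := fun j => measurable_rank_set j
  have hsame : ∀ j, ν (A j) = ν (A (Fin.last n)) := by
    intro j
    have hT : Measurable (fun s : Fin (n + 1) → ℝ => s ∘ Equiv.swap j (Fin.last n)) :=
      measurable_pi_lambda _ fun i => measurable_pi_apply _
    have hpre : (fun s : Fin (n + 1) → ℝ => s ∘ Equiv.swap j (Fin.last n)) ⁻¹' A (Fin.last n)
        = A j := by
      ext s
      simp only [hA, Set.mem_preimage, Set.mem_setOf_eq, Function.comp]
      have h2 : (Finset.filter (fun i : Fin (n + 1) =>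
            s (Equiv.swap j (Fin.last n) i) < s (Equiv.swap j (Fin.last n) (Fin.last n)))
            Finset.univ).card
          = (Finset.filter (fun i : Fin (n + 1) => s i < s j) Finset.univ).card := by
        simp only [Equiv.swap_apply_right]
        exact count_lt_perm s (Equiv.swap j (Fin.last n)) (s j)
      rw [h2]
    calc ν (A j) = ν ((fun s : Fin (n + 1) → ℝ => s ∘ Equiv.swap j (Fin.last n)) ⁻¹'
          A (Fin.last n)) := by rw [hpre]
      _ = (Measure.map (fun s : Fin (n + 1) → ℝ => s ∘ Equiv.swap j (Fin.last n)) ν)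
          (A (Fin.last n)) := (Measure.map_apply hT (hAmeas _)).symm
      _ = ν (A (Fin.last n)) := by rw [hν, pi_map_perm]
  have hpt : ∀ s : Fin (n + 1) → ℝ,
      (k : ENNReal) ≤ ∑ j : Fin (n + 1), (A j).indicator (fun _ => (1 : ENNReal)) s := by
    intro s
    have hcount := count_low_rank hk1 hk s
    have hsum : ∑ j : Fin (n + 1), (A j).indicator (fun _ => (1 : ENNReal)) s
        = ((Finset.filter (fun j : Fin (n + 1) =>
            (Finset.filter (fun i : Fin (n + 1) => s i < s j) Finset.univ).card ≤ k - 1)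
          Finset.univ).card : ENNReal) := by
      rw [Finset.card_filter, Nat.cast_sum]
      refine Finset.sum_congr rfl fun j _ => ?_
      by_cases hj : s ∈ A j
      · have hj' : (Finset.filter (fun i : Fin (n + 1) => s i < s j) Finset.univ).card
            ≤ k - 1 := hj
        simp [Set.indicator_of_mem hj, hj']
      · have hj' : ¬ (Finset.filter (fun i : Fin (n + 1) => s i < s j) Finset.univ).card
            ≤ k - 1 := hj
        simp [Set.indicator_of_notMem hj, hj']
    rw [hsum]
    exact_mod_cast hcount
  have hint : (k : ENNReal) ≤ ∑ j : Fin (n + 1), ν (A j) := by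
    calc (k : ENNReal) = ∫⁻ _, (k : ENNReal) ∂ν := by
          rw [lintegral_const, measure_univ, mul_one]
      _ ≤ ∫⁻ s, ∑ j : Fin (n + 1), (A j).indicator (fun _ => (1 : ENNReal)) s ∂ν :=
          lintegral_mono hpt
      _ = ∑ j : Fin (n + 1), ∫⁻ s, (A j).indicator (fun _ => (1 : ENNReal)) s ∂ν :=
          lintegral_finset_sum _ fun j _ => (measurable_const.indicator (hAmeas j))
      _ = ∑ j : Fin (n + 1), ν (A j) := by
          refine Finset.sum_congr rfl fun j _ => ?_
          exact lintegral_indicator_one (hAmeas j)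
  calc (k : ENNReal) ≤ ∑ j : Fin (n + 1), ν (A j) := hint
    _ = ∑ _j : Fin (n + 1), ν (A (Fin.last n)) := Finset.sum_congr rfl fun j _ => hsame j
    _ = (n + 1) * ν (A (Fin.last n)) := by
        rw [Finset.sum_const, Finset.card_univ, Fintype.card_fin, nsmul_eq_mul]
        norm_cast
/-- Marginal coverage of split conformal prediction with the absolute-residual score:
for i.i.d. pairs `(Xᵢ, Yᵢ)`, a fixed model `μ`, scores `Sᵢ = |Yᵢ - μ(Xᵢ)|` on the first
`n` pairs, and `q̂` the `⌈(1-α)(n+1)⌉`-th smallest score (`+∞` if `⌈(1-α)(n+1)⌉ > n`),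
the interval `[μ(X_{n+1}) - q̂, μ(X_{n+1}) + q̂]` contains `Y_{n+1}` with probability at
least `1 - α`. -/
theorem split_conformal_coverage {d n : ℕ} (hn : 1 ≤ n) (α : ℝ) (hα : α ∈ Set.Ioo (0 : ℝ) 1)
    {Ω : Type*} [MeasurableSpace Ω] (P : Measure Ω) [IsProbabilityMeasure P]
    (X : Fin (n + 1) → Ω → (Fin d → ℝ)) (Y : Fin (n + 1) → Ω → ℝ)
    (hmeas : ∀ i, Measurable fun ω => (X i ω, Y i ω))
    (hindep : iIndepFun (fun i ω => (X i ω, Y i ω)) P)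
    (hident : ∀ i j, Measure.map (fun ω => (X i ω, Y i ω)) P =
      Measure.map (fun ω => (X j ω, Y j ω)) P)
    (μ : (Fin d → ℝ) → ℝ) (hμ : Measurable μ) :
    ENNReal.ofReal (1 - α) ≤
      P {ω |
          ((Y (Fin.last n) ω : ℝ) : EReal) ∈
            Set.Icc
              ((μ (X (Fin.last n) ω) : EReal) -
                kthSmallestE hn (fun i : Fin n => |Y i.castSucc ω - μ (X i.castSucc ω)|)
                  ⌈(1 - α) * (n + 1)⌉₊)
              ((μ (X (Fin.last n) ω) : EReal) +
                kthSmallestE hn (fun i : Fin n => |Y i.castSucc ω - μ (X i.castSucc ω)|)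
                  ⌈(1 - α) * (n + 1)⌉₊)} := by
  classical
  obtain ⟨hα0, hα1⟩ := hα
  set k : ℕ := ⌈(1 - α) * (n + 1)⌉₊ with hkdef
  have hk1 : 1 ≤ k := by
    rw [hkdef]
    exact Nat.one_le_ceil_iff.mpr (mul_pos (by linarith) (by positivity))
  by_cases hkn : k ≤ n
  · -- main case
    set S : Fin (n + 1) → Ω → ℝ := fun i ω => |Y i ω - μ (X i ω)| with hSdef
    have hg : Measurable (fun p : (Fin d → ℝ) × ℝ => |p.2 - μ p.1|) :=
      (measurable_snd.sub (hμ.comp measurable_fst)).abs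
    have hSmeas : ∀ i, Measurable (S i) := fun i => hg.comp (hmeas i)
    have hSindep : iIndepFun S P :=
      hindep.comp (fun _ p => |p.2 - μ p.1|) (fun _ => hg)
    have hSident : ∀ i, Measure.map (S i) P = Measure.map (S 0) P := by
      intro i
      have h1 : Measure.map (S i) P
          = Measure.map (fun p : (Fin d → ℝ) × ℝ => |p.2 - μ p.1|)
            (Measure.map (fun ω => (X i ω, Y i ω)) P) := by
        rw [Measure.map_map hg (hmeas i)]; rfl
      have h2 : Measure.map (S 0) P
          = Measure.map (fun p : (Fin d → ℝ) × ℝ => |p.2 - μ p.1|)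
            (Measure.map (fun ω => (X 0 ω, Y 0 ω)) P) := by
        rw [Measure.map_map hg (hmeas 0)]; rfl
      rw [h1, h2, hident i 0]
    set m : Measure ℝ := Measure.map (S 0) P with hm
    have : IsProbabilityMeasure m := Measure.isProbabilityMeasure_map (hSmeas 0).aemeasurable
    have hjoint : Measure.map (fun ω i => S i ω) P = Measure.pi (fun _ : Fin (n + 1) => m) := by
      rw [map_pi_of_iIndep S hSmeas hSindep]
      congr 1
      funext i
      exact hSident i
    set A : Set (Fin (n + 1) → ℝ) :=
      {s | (Finset.filter (fun i : Fin (n + 1) => s i < s (Fin.last n)) Finset.univ).card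
        ≤ k - 1} with hA
    have hAmeas : MeasurableSet A := measurable_rank_set (Fin.last n)
    -- rewrite the event
    have hevent : {ω : Ω |
          ((Y (Fin.last n) ω : ℝ) : EReal) ∈
            Set.Icc
              ((μ (X (Fin.last n) ω) : EReal) -
                kthSmallestE hn (fun i : Fin n => |Y i.castSucc ω - μ (X i.castSucc ω)|) k)
              ((μ (X (Fin.last n) ω) : EReal) +
                kthSmallestE hn (fun i : Fin n => |Y i.castSucc ω - μ (X i.castSucc ω)|) k)}
        = (fun ω i => S i ω) ⁻¹' A := by
      ext ω
      set v : Fin n → ℝ := fun i => |Y i.castSucc ω - μ (X i.castSucc ω)| with hv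
      set q : ℝ := v (Tuple.sort v ⟨k - 1, by omega⟩) with hq
      have hkth : kthSmallestE hn v k = (q : EReal) := by
        rw [kthSmallestE, dif_pos hkn]
      have hiff1 : ((Y (Fin.last n) ω : ℝ) : EReal) ∈
          Set.Icc ((μ (X (Fin.last n) ω) : EReal) - (q : EReal))
            ((μ (X (Fin.last n) ω) : EReal) + (q : EReal))
          ↔ S (Fin.last n) ω ≤ q := by
        rw [← EReal.coe_sub, ← EReal.coe_add, Set.mem_Icc, EReal.coe_le_coe_iff,
          EReal.coe_le_coe_iff]
        show _ ↔ |Y (Fin.last n) ω - μ (X (Fin.last n) ω)| ≤ q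
        rw [abs_le]
        constructor
        · rintro ⟨h1, h2⟩
          constructor <;> linarith
        · rintro ⟨h1, h2⟩
          constructor <;> linarith
      have hiff2 : S (Fin.last n) ω ≤ q ↔
          (Finset.filter (fun i : Fin n => v i < S (Fin.last n) ω) Finset.univ).card < k :=
        le_kth_iff v hk1 hkn _
      have hcount : (Finset.filter (fun i : Fin (n + 1) => S i ω < S (Fin.last n) ω)
            Finset.univ).card
          = (Finset.filter (fun i : Fin n => v i < S (Fin.last n) ω) Finset.univ).card := by
        rw [Finset.card_filter, Finset.card_filter, Fin.sum_univ_castSucc]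
        simp only [lt_self_iff_false, if_false, add_zero]
        rfl
      simp only [Set.mem_setOf_eq, Set.mem_preimage, hkth, hA]
      rw [show kthSmallestE hn (fun i : Fin n => |Y i.castSucc ω - μ (X i.castSucc ω)|) k = (q : EReal) from hkth]
      rw [hiff1, hiff2, hcount]
      omega
    rw [hevent, ← Measure.map_apply (measurable_pi_lambda _ hSmeas) hAmeas, hjoint]
    have hbound := pi_rank_bound hk1 (by omega : k ≤ n + 1) m
    -- from k ≤ (n+1) * ν A deduce ofReal (1-α) ≤ ν A
    set νA := Measure.pi (fun _ : Fin (n + 1) => m) A with hνA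
    have hle : ENNReal.ofReal (1 - α) * (n + 1) ≤ (n + 1) * νA := by
      calc ENNReal.ofReal (1 - α) * (n + 1)
          = ENNReal.ofReal ((1 - α) * (n + 1)) := by
            rw [ENNReal.ofReal_mul (by linarith)]
            congr 1
            rw [ENNReal.ofReal_add (Nat.cast_nonneg n) zero_le_one,
              ENNReal.ofReal_natCast, ENNReal.ofReal_one]
        _ ≤ (k : ENNReal) := by
            rw [← ENNReal.ofReal_natCast k]
            exact ENNReal.ofReal_le_ofReal (Nat.le_ceil _)
        _ ≤ (n + 1) * νA := hbound
    rw [mul_comm] at hle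
    have hne : ((n : ENNReal) + 1) ≠ 0 :=
      (lt_of_lt_of_le zero_lt_one (le_add_self : (1 : ENNReal) ≤ (n : ENNReal) + 1)).ne'
    have hnt : ((n : ENNReal) + 1) ≠ ⊤ := by
      simp [ENNReal.add_eq_top]
    exact (ENNReal.mul_le_mul_iff_right hne hnt).mp hle
  · -- trivial case: k > n, quantile is +∞
    have hset : {ω : Ω |
          ((Y (Fin.last n) ω : ℝ) : EReal) ∈
            Set.Icc
              ((μ (X (Fin.last n) ω) : EReal) -
                kthSmallestE hn (fun i : Fin n => |Y i.castSucc ω - μ (X i.castSucc ω)|) k)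
              ((μ (X (Fin.last n) ω) : EReal) +
                kthSmallestE hn (fun i : Fin n => |Y i.castSucc ω - μ (X i.castSucc ω)|) k)}
        = Set.univ := by
      ext ω
      simp only [Set.mem_setOf_eq, Set.mem_univ, iff_true]
      rw [kthSmallestE, dif_neg hkn]
      rw [EReal.sub_top, EReal.coe_add_top]
      exact ⟨bot_le, le_top⟩
    rw [hset, measure_univ]
    exact ENNReal.ofReal_le_one.mpr (by linarith)
end

section
/- Let n ≥ 2 and α ∈ (0,1), and let (X₁,Y₁),…,(Xₙ,Yₙ),(X_{n+1},Y_{n+1}) be i.i.d. random pairs in ℝ^d × ℝ. Let 𝒜 be a training algorithm mapping any tuple of n−1 pairs in ℝ^d × ℝ to a function ℝ^d → ℝ, such that (data, x) ↦ 𝒜(data)(x) is jointly measurable and 𝒜 is symmetric, i.e., invariant under permutations of its n−1 input pairs. For i = 1,…,n let μ_{−i} := 𝒜((X_j,Y_j)_{j ≤ n, j ≠ i}) be the model trained with the i-th point left out, and let Rᵢ := |Yᵢ − μ_{−i}(Xᵢ)| be the leave-one-out residuals. Define q̂⁺ as the ⌈(1−α)(n+1)⌉-th smallest value among { μ_{−i}(X_{n+1})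 + Rᵢ : i = 1,…,n } (equal to +∞ if ⌈(1−α)(n+1)⌉ > n) and q̂⁻ as the ⌈(1−α)(n+1)⌉-th largest value among { μ_{−i}(X_{n+1}) − Rᵢ : i = 1,…,n } (equal to −∞ if ⌈(1−α)(n+1)⌉ > n). Then ℙ( q̂⁻ ≤ Y_{n+1} ≤ q̂⁺ ) ≥ 1 − 2α. -/
open MeasureTheory ProbabilityTheory
open scoped ENNReal

/-- The `k`-th largest value (1-indexed, `1 ≤ k`) among `v 0, …, v (n-1)`, as an element
of `EReal`, with the convention that it is `-∞` when `k > n`. -/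
noncomputable def kthLargestE {n : ℕ} (hn : 1 ≤ n) (v : Fin n → ℝ) (k : ℕ) (hk : 1 ≤ k) :
    EReal :=
  if h : k ≤ n then ((v (Tuple.sort v ⟨n - k, by omega⟩) : ℝ) : EReal) else ⊥

/-- The leave-one-out model: the model trained by the algorithm `A` on the `m + 1`
training pairs `W` with the `i`-th pair removed. -/
noncomputable def looModel {d m : ℕ} (A : (Fin m → ((Fin d → ℝ) × ℝ)) → (Fin d → ℝ) → ℝ)
    (W : Fin (m + 1) → ((Fin d → ℝ) × ℝ)) (i : Fin (m + 1)) : (Fin d → ℝ) → ℝ :=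
  A (Fin.removeNth i W)

namespace JKAux


variable {d m : ℕ}

lemma compl_pair_card (i j : Fin (m + 2)) (h : i ≠ j) :
    ({i, j}ᶜ : Finset (Fin (m + 2))).card = m := by
  rw [Finset.card_compl, Finset.card_insert_of_notMem (by simpa using h),
    Finset.card_singleton, Fintype.card_fin]
  omega

noncomputable def model2 (A : (Fin m → ((Fin d → ℝ) × ℝ)) → (Fin d → ℝ) → ℝ)
    (W : Fin (m + 2) → ((Fin d → ℝ) × ℝ)) (i j : Fin (m + 2)) : (Fin d → ℝ) → ℝ :=
  if h : i ≠ j then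
    A (fun l => W (({i, j}ᶜ : Finset (Fin (m + 2))).orderEmbOfFin (compl_pair_card i j h) l))
  else fun _ => 0

lemma model2_eq (A : (Fin m → ((Fin d → ℝ) × ℝ)) → (Fin d → ℝ) → ℝ)
    (W : Fin (m + 2) → ((Fin d → ℝ) × ℝ)) {i j : Fin (m + 2)} (h : i ≠ j)
    {f : Fin m → Fin (m + 2)} (hmono : StrictMono f)
    (hmem : ∀ l, f l ∈ ({i, j}ᶜ : Finset (Fin (m + 2)))) :
    model2 A W i j = A (fun l => W (f l)) := by
  rw [model2, dif_pos h]
  ext l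
  rw [Finset.orderEmbOfFin_unique (compl_pair_card i j h) hmem hmono]

lemma model2_comm (A : (Fin m → ((Fin d → ℝ) × ℝ)) → (Fin d → ℝ) → ℝ)
    (W : Fin (m + 2) → ((Fin d → ℝ) × ℝ)) (i j : Fin (m + 2)) :
    model2 A W i j = model2 A W j i := by
  rcases eq_or_ne i j with rfl | h
  · rfl
  · rw [model2_eq A W h (f := fun l => ({j, i}ᶜ : Finset (Fin (m + 2))).orderEmbOfFin
        (compl_pair_card j i h.symm) l)
      (({j, i}ᶜ : Finset (Fin (m + 2))).orderEmbOfFin (compl_pair_card j i h.symm)).strictMono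
      (fun l => by
        have := Finset.orderEmbOfFin_mem ({j, i}ᶜ : Finset (Fin (m + 2)))
          (compl_pair_card j i h.symm) l
        simp only [Finset.mem_compl, Finset.mem_insert, Finset.mem_singleton] at this ⊢
        tauto)]
    rw [model2, dif_pos h.symm]


noncomputable def res2 (A : (Fin m → ((Fin d → ℝ) × ℝ)) → (Fin d → ℝ) → ℝ)
    (W : Fin (m + 2) → ((Fin d → ℝ) × ℝ)) (i j : Fin (m + 2)) : ℝ :=
  |(W i).2 - model2 A W i j (W i).1|

noncomputable def outdeg (A : (Fin m → ((Fin d → ℝ) × ℝ)) → (Fin d → ℝ) → ℝ)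
    (W : Fin (m + 2) → ((Fin d → ℝ) × ℝ)) (i : Fin (m + 2)) : ℕ :=
  (Finset.univ.filter fun j => res2 A W j i < res2 A W i j).card

lemma model2_castSucc_last (A : (Fin m → ((Fin d → ℝ) × ℝ)) → (Fin d → ℝ) → ℝ)
    (W : Fin (m + 2) → ((Fin d → ℝ) × ℝ)) (i : Fin (m + 1)) :
    model2 A W i.castSucc (Fin.last (m + 1)) = looModel A (fun j => W j.castSucc) i := by
  rw [model2_eq A W (Fin.castSucc_lt_last i).ne (f := fun l => (i.succAbove l).castSucc)
    (Fin.strictMono_castSucc.comp (Fin.strictMono_succAbove i))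
    (fun l => by
      simp only [Finset.mem_compl, Finset.mem_insert, Finset.mem_singleton]
      push_neg
      exact ⟨fun hc => Fin.succAbove_ne i l (Fin.castSucc_injective _ hc),
        (Fin.castSucc_lt_last _).ne⟩)]
  rfl

lemma model2_perm (A : (Fin m → ((Fin d → ℝ) × ℝ)) → (Fin d → ℝ) → ℝ)
    (hAsymm : ∀ (data : Fin m → ((Fin d → ℝ) × ℝ)) (σ : Equiv.Perm (Fin m)),
      A (data ∘ σ) = A data)
    (W : Fin (m + 2) → ((Fin d → ℝ) × ℝ)) (σ : Equiv.Perm (Fin (m + 2))) (i j : Fin (m + 2)) :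
    model2 A (fun l => W (σ l)) i j = model2 A W (σ i) (σ j) := by
  rcases eq_or_ne i j with rfl | h
  · rw [model2, dif_neg (not_ne_iff.mpr rfl), model2, dif_neg (not_ne_iff.mpr rfl)]
  · have hσ : σ i ≠ σ j := fun hc => h (σ.injective hc)
    set e₁ := ({i, j}ᶜ : Finset (Fin (m + 2))).orderEmbOfFin (compl_pair_card i j h) with he₁
    set e₂ := ({σ i, σ j}ᶜ : Finset (Fin (m + 2))).orderIsoOfFin (compl_pair_card (σ i) (σ j) hσ)
      with he₂
    have hmem : ∀ l, σ (e₁ l) ∈ ({σ i, σ j}ᶜ : Finset (Fin (m + 2))) := by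
      intro l
      have h1 := Finset.orderEmbOfFin_mem ({i, j}ᶜ : Finset (Fin (m + 2)))
        (compl_pair_card i j h) l
      simp only [Finset.mem_compl, Finset.mem_insert, Finset.mem_singleton] at h1 ⊢
      push_neg at h1 ⊢
      exact ⟨fun hc => h1.1 (σ.injective hc), fun hc => h1.2 (σ.injective hc)⟩
    set g : Fin m → Fin m := fun l => e₂.symm ⟨σ (e₁ l), hmem l⟩ with hgdef
    have hg : ∀ l, (e₂ (g l) : Fin (m + 2)) = σ (e₁ l) := by
      intro l
      rw [hgdef]
      simp
    have ginj : Function.Injective g := by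
      intro a b hab
      apply e₁.injective
      apply σ.injective
      rw [← hg a, ← hg b, hab]
    set π : Equiv.Perm (Fin m) := Equiv.ofBijective g (Finite.injective_iff_bijective.mp ginj)
      with hπ
    rw [model2_eq A (fun l => W (σ l)) h e₁.strictMono
      (fun l => Finset.orderEmbOfFin_mem _ _ l)]
    rw [model2, dif_pos hσ]
    have hfun : (fun l => W (σ (e₁ l))) =
        (fun l => W (({σ i, σ j}ᶜ : Finset (Fin (m + 2))).orderEmbOfFin
          (compl_pair_card (σ i) (σ j) hσ) l)) ∘ π := by
      funext l
      simp only [Function.comp_apply, hπ, Equiv.ofBijective_apply]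
      rw [← hg l]
      rfl
    rw [hfun, hAsymm]

lemma res2_perm (A : (Fin m → ((Fin d → ℝ) × ℝ)) → (Fin d → ℝ) → ℝ)
    (hAsymm : ∀ (data : Fin m → ((Fin d → ℝ) × ℝ)) (σ : Equiv.Perm (Fin m)),
      A (data ∘ σ) = A data)
    (W : Fin (m + 2) → ((Fin d → ℝ) × ℝ)) (σ : Equiv.Perm (Fin (m + 2))) (i j : Fin (m + 2)) :
    res2 A (fun l => W (σ l)) i j = res2 A W (σ i) (σ j) := by
  rw [res2, res2, model2_perm A hAsymm W σ i j]

lemma outdeg_perm (A : (Fin m → ((Fin d → ℝ) × ℝ)) → (Fin d → ℝ) → ℝ)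
    (hAsymm : ∀ (data : Fin m → ((Fin d → ℝ) × ℝ)) (σ : Equiv.Perm (Fin m)),
      A (data ∘ σ) = A data)
    (W : Fin (m + 2) → ((Fin d → ℝ) × ℝ)) (σ : Equiv.Perm (Fin (m + 2))) (i : Fin (m + 2)) :
    outdeg A (fun l => W (σ l)) i = outdeg A W (σ i) := by
  unfold outdeg
  apply Finset.card_bij (fun j _ => σ j)
  · intro a ha
    simp only [Finset.mem_filter, Finset.mem_univ, true_and] at ha ⊢
    rwa [res2_perm A hAsymm W σ, res2_perm A hAsymm W σ] at ha
  · intro a _ b _ hab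
    exact σ.injective hab
  · intro b hb
    refine ⟨σ.symm b, ?_, by simp⟩
    simp only [Finset.mem_filter, Finset.mem_univ, true_and] at hb ⊢
    rw [res2_perm A hAsymm W σ, res2_perm A hAsymm W σ]
    simp only [Equiv.apply_symm_apply]
    exact hb



lemma tournament_bound {N k : ℕ} (r : Fin N → Fin N → ℝ)
    (S : Finset (Fin N))
    (hS : ∀ i ∈ S, k ≤ (Finset.univ.filter fun j => r j i < r i j).card)
    (hne : S.Nonempty) : S.card + 2 * k + 1 ≤ 2 * N := by
  classical
  set B : Fin N → Fin N → Prop := fun i j => r j i < r i j with hB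
  have hBasym : ∀ i j, B i j → ¬ B j i := fun i j h1 h2 => lt_asymm h1 h2
  set T := (S ×ˢ S).filter (fun p => B p.1 p.2) with hT
  set T' := (S ×ˢ S).filter (fun p => B p.2 p.1) with hT'
  set D := S.image (fun i => (i, i)) with hD
  have hDcard : D.card = S.card :=
    Finset.card_image_of_injective _ (fun a b hab => (Prod.mk.injEq _ _ _ _).mp hab |>.1)
  have hT'card : T'.card = T.card := by
    apply Finset.card_bij (fun p _ => (p.2, p.1))
    · intro p hp
      simp only [hT, hT', Finset.mem_filter, Finset.mem_product] at hp ⊢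
      exact ⟨⟨hp.1.2, hp.1.1⟩, hp.2⟩
    · intro a _ b _ hab
      simp only [Prod.mk.injEq] at hab
      exact Prod.ext hab.2 hab.1
    · intro p hp
      simp only [hT, hT', Finset.mem_filter, Finset.mem_product] at hp ⊢
      exact ⟨(p.2, p.1), ⟨⟨hp.1.2, hp.1.1⟩, hp.2⟩, rfl⟩
  have hdisj1 : Disjoint T T' := by
    rw [Finset.disjoint_left]
    intro p hp hp'
    simp only [hT, hT', Finset.mem_filter] at hp hp'
    exact hBasym _ _ hp.2 hp'.2
  have hdisj2 : Disjoint (T ∪ T') D := by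
    rw [Finset.disjoint_left]
    intro p hp hpD
    simp only [hD, Finset.mem_image] at hpD
    obtain ⟨a, _, rfl⟩ := hpD
    simp only [hT, hT', Finset.mem_union, Finset.mem_filter] at hp
    rcases hp with h | h
    · exact lt_irrefl _ h.2
    · exact lt_irrefl _ h.2
  have hsub : T ∪ T' ∪ D ⊆ S ×ˢ S := by
    intro p hp
    simp only [hT, hT', hD, Finset.mem_union, Finset.mem_filter, Finset.mem_image] at hp
    rcases hp with (h | h) | h
    · exact h.1
    · exact h.1
    · obtain ⟨a, ha, rfl⟩ := h
      exact Finset.mem_product.mpr ⟨ha, ha⟩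
  have h1 : 2 * T.card + S.card ≤ S.card * S.card := by
    have := Finset.card_le_card hsub
    rw [Finset.card_union_of_disjoint hdisj2, Finset.card_union_of_disjoint hdisj1,
      Finset.card_product, hDcard, hT'card] at this
    omega
  have h3 : T.card = ∑ i ∈ S, (S.filter fun j => B i j).card := by
    rw [Finset.card_eq_sum_card_fiberwise (f := Prod.fst) (t := S)
      (fun p hp => (Finset.mem_product.mp (Finset.filter_subset _ _ hp)).1)]
    refine Finset.sum_congr rfl fun i hi => ?_
    apply Finset.card_bij (fun p _ => p.2)
    · intro p hp
      simp only [Finset.mem_filter, Finset.mem_product] at hp ⊢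
      rcases hp with ⟨⟨⟨_, h2⟩, h3⟩, h4⟩
      exact ⟨h2, h4 ▸ h3⟩
    · intro a ha b hb hab
      simp only [Finset.mem_filter] at ha hb
      exact Prod.ext (ha.2.trans hb.2.symm) hab
    · intro b hb
      simp only [Finset.mem_filter, Finset.mem_product] at hb ⊢
      exact ⟨(i, b), ⟨⟨⟨hi, hb.1⟩, hb.2⟩, rfl⟩, rfl⟩
  have h2 : ∀ i ∈ S, k + S.card ≤ (S.filter fun j => B i j).card + N := by
    intro i hi
    have hsubf : (Finset.univ.filter fun j => r j i < r i j) ⊆ (S.filter fun j => B i j) ∪ Sᶜ := by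
      intro j hj
      by_cases hjS : j ∈ S
      · exact Finset.mem_union_left _ (Finset.mem_filter.mpr
          ⟨hjS, (Finset.mem_filter.mp hj).2⟩)
      · exact Finset.mem_union_right _ (Finset.mem_compl.mpr hjS)
    have := (hS i hi).trans ((Finset.card_le_card hsubf).trans (Finset.card_union_le _ _))
    have hc := Finset.card_add_card_compl S
    rw [Fintype.card_fin] at hc
    omega
  have h4 : S.card * (k + S.card) ≤ T.card + S.card * N := by
    calc S.card * (k + S.card) = ∑ _i ∈ S, (k + S.card) := by
          rw [Finset.sum_const, smul_eq_mul]
      _ ≤ ∑ i ∈ S, ((S.filter fun j => B i j).card + N) := Finset.sum_le_sum h2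
      _ = T.card + S.card * N := by rw [Finset.sum_add_distrib, ← h3, Finset.sum_const,
            smul_eq_mul]
  have hc1 : 1 ≤ S.card := hne.card_pos
  have hmul : S.card * (S.card + 2 * k + 1) ≤ S.card * (2 * N) := by nlinarith
  exact Nat.le_of_mul_le_mul_left hmul (by omega)


lemma measurable_res2 (A : (Fin m → ((Fin d → ℝ) × ℝ)) → (Fin d → ℝ) → ℝ)
    (hA : Measurable fun q : (Fin m → ((Fin d → ℝ) × ℝ)) × (Fin d → ℝ) => A q.1 q.2)
    (i j : Fin (m + 2)) :
    Measurable fun W : Fin (m + 2) → ((Fin d → ℝ) × ℝ) => res2 A W i j := by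
  have h2 : Measurable fun W : Fin (m + 2) → ((Fin d → ℝ) × ℝ) => model2 A W i j (W i).1 := by
    rcases eq_or_ne i j with rfl | h
    · have he : (fun W : Fin (m + 2) → ((Fin d → ℝ) × ℝ) => model2 A W i i (W i).1) =
          fun _ => (0 : ℝ) := by
        funext W
        rw [model2, dif_neg (not_ne_iff.mpr rfl)]
      rw [he]
      exact measurable_const
    · set e : Fin m → Fin (m + 2) :=
        fun l => ({i, j}ᶜ : Finset (Fin (m + 2))).orderEmbOfFin (compl_pair_card i j h) l
        with he'
      have he : (fun W : Fin (m + 2) → ((Fin d → ℝ) × ℝ) => model2 A W i j (W i).1) =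
          (fun q : (Fin m → ((Fin d → ℝ) × ℝ)) × (Fin d → ℝ) => A q.1 q.2) ∘
            (fun W : Fin (m + 2) → ((Fin d → ℝ) × ℝ) => ((fun l => W (e l)), (W i).1)) := by
        funext W
        simp only [Function.comp_apply]
        rw [model2, dif_pos h]
      rw [he]
      have hg : Measurable (fun W : Fin (m + 2) → ((Fin d → ℝ) × ℝ) =>
          ((fun l => W (e l)), (W i).1)) := by
        apply Measurable.prodMk
        · exact measurable_pi_lambda _ fun l => measurable_pi_apply (e l)
        · exact measurable_fst.comp (measurable_pi_apply i)
      exact hA.comp hg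
  exact ((measurable_snd.comp (measurable_pi_apply i)).sub h2).abs

lemma measurableSet_strange (A : (Fin m → ((Fin d → ℝ) × ℝ)) → (Fin d → ℝ) → ℝ)
    (hA : Measurable fun q : (Fin m → ((Fin d → ℝ) × ℝ)) × (Fin d → ℝ) => A q.1 q.2)
    (k : ℕ) (i : Fin (m + 2)) :
    MeasurableSet {W : Fin (m + 2) → ((Fin d → ℝ) × ℝ) | k ≤ outdeg A W i} := by
  have hset : {W : Fin (m + 2) → ((Fin d → ℝ) × ℝ) | k ≤ outdeg A W i} =
      ⋃ (s : Finset (Fin (m + 2))) (_ : s.card = k),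
        ⋂ j ∈ s, {W | res2 A W j i < res2 A W i j} := by
    ext W
    simp only [Set.mem_setOf_eq, Set.mem_iUnion, Set.mem_iInter, outdeg]
    constructor
    · intro hW
      obtain ⟨s, hs_sub, hs_card⟩ := Finset.exists_subset_card_eq hW
      exact ⟨s, hs_card, fun j hj => (Finset.mem_filter.mp (hs_sub hj)).2⟩
    · rintro ⟨s, hcard, hmem⟩
      calc k = s.card := hcard.symm
        _ ≤ _ := Finset.card_le_card fun j hj =>
            Finset.mem_filter.mpr ⟨Finset.mem_univ _, hmem j hj⟩
  rw [hset]
  exact MeasurableSet.iUnion fun s => MeasurableSet.iUnion fun _ =>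
    MeasurableSet.biInter (Set.to_countable _) fun j _ =>
      measurableSet_lt (measurable_res2 A hA j i) (measurable_res2 A hA i j)

lemma map_perm_tuple {Ω : Type*} [MeasurableSpace Ω] (P : Measure Ω) [IsProbabilityMeasure P]
    (V : Fin (m + 2) → Ω → ((Fin d → ℝ) × ℝ))
    (hVmeas : ∀ i, Measurable (V i))
    (hVindep : iIndepFun V P)
    (hVident : ∀ i j, Measure.map (V i) P = Measure.map (V j) P)
    (σ : Equiv.Perm (Fin (m + 2))) :
    Measure.map (fun ω l => V (σ l) ω) P = Measure.map (fun ω l => V l ω) P := by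
  have hprob : IsProbabilityMeasure (Measure.map (V 0) P) :=
    Measure.isProbabilityMeasure_map (hVmeas 0).aemeasurable
  have key : ∀ τ : Equiv.Perm (Fin (m + 2)),
      Measure.pi (fun _ : Fin (m + 2) => Measure.map (V 0) P) =
        Measure.map (fun ω l => V (τ l) ω) P := by
    intro τ
    refine Measure.pi_eq fun s hs => ?_
    rw [Measure.map_apply (measurable_pi_lambda _ fun l => hVmeas (τ l))
      (MeasurableSet.univ_pi hs)]
    have hpre : (fun ω l => V (τ l) ω) ⁻¹' Set.univ.pi s =
        ⋂ j, V j ⁻¹' s (τ.symm j) := by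
      rw [← Function.Surjective.iInter_comp τ.surjective
        (fun j => V j ⁻¹' s (τ.symm j))]
      ext ω
      simp [Set.mem_univ_pi]
    rw [hpre, hVindep.meas_iInter (fun j => ⟨s (τ.symm j), hs _, rfl⟩)]
    have hterm : ∀ j : Fin (m + 2), P (V j ⁻¹' s (τ.symm j)) =
        Measure.map (V 0) P (s (τ.symm j)) := by
      intro j
      rw [← hVident j 0, Measure.map_apply (hVmeas j) (hs _)]
    rw [Finset.prod_congr rfl fun j _ => hterm j]
    exact Equiv.prod_comp τ.symm (fun j => Measure.map (V 0) P (s j))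
  exact (key σ).symm.trans (key (Equiv.refl _))

lemma noncover_strange (A : (Fin m → ((Fin d → ℝ) × ℝ)) → (Fin d → ℝ) → ℝ)
    (W : Fin (m + 2) → ((Fin d → ℝ) × ℝ)) (k : ℕ) (hk : 1 ≤ k)
    (h : ¬(kthLargestE (Nat.le_add_left 1 m)
        (fun i : Fin (m + 1) =>
          looModel A (fun j => W j.castSucc) i (W (Fin.last (m + 1))).1 -
            |(W i.castSucc).2 - looModel A (fun j => W j.castSucc) i (W i.castSucc).1|) k hk ≤
          (((W (Fin.last (m + 1))).2 : ℝ) : EReal) ∧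
        (((W (Fin.last (m + 1))).2 : ℝ) : EReal) ≤
          kthSmallestE (Nat.le_add_left 1 m)
          (fun i : Fin (m + 1) =>
            looModel A (fun j => W j.castSucc) i (W (Fin.last (m + 1))).1 +
              |(W i.castSucc).2 - looModel A (fun j => W j.castSucc) i (W i.castSucc).1|) k)) :
    k ≤ outdeg A W (Fin.last (m + 1)) := by
  set Y : ℝ := (W (Fin.last (m + 1))).2 with hY
  set X : Fin d → ℝ := (W (Fin.last (m + 1))).1 with hX
  set μf : Fin (m + 1) → (Fin d → ℝ) → ℝ := fun i => looModel A (fun j => W j.castSucc) i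
    with hμf
  set R : Fin (m + 1) → ℝ := fun i => |(W i.castSucc).2 - μf i (W i.castSucc).1| with hR
  have key : ∀ i : Fin (m + 1), R i < |Y - μf i X| →
      i.castSucc ∈ Finset.univ.filter
        (fun j => res2 A W j (Fin.last (m + 1)) < res2 A W (Fin.last (m + 1)) j) := by
    intro i hi
    refine Finset.mem_filter.mpr ⟨Finset.mem_univ _, ?_⟩
    have e1 : res2 A W i.castSucc (Fin.last (m + 1)) = R i := by
      rw [res2, model2_castSucc_last]
    have e2 : res2 A W (Fin.last (m + 1)) i.castSucc = |Y - μf i X| := by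
      rw [res2, model2_comm, model2_castSucc_last]
    rw [e1, e2]
    exact hi
  rcases not_and_or.mp h with h1 | h2
  · -- Y below the lower endpoint
    rw [not_le] at h1
    by_cases hkm : k ≤ m + 1
    swap
    · rw [kthLargestE, dif_neg hkm] at h1
      exact absurd h1 (by simp)
    set vlo : Fin (m + 1) → ℝ := fun i => μf i X - R i with hvlo
    rw [kthLargestE, dif_pos hkm, EReal.coe_lt_coe_iff] at h1
    have hbig : ∀ l : Fin k,
        (Fin.castSucc (Tuple.sort vlo ⟨m + 1 - k + l.1, by omega⟩)) ∈ Finset.univ.filter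
          (fun j => res2 A W j (Fin.last (m + 1)) < res2 A W (Fin.last (m + 1)) j) := by
      intro l
      set i := Tuple.sort vlo ⟨m + 1 - k + l.1, by omega⟩ with hi
      have hmono := Tuple.monotone_sort vlo
        (a := ⟨m + 1 - k, by omega⟩) (b := ⟨m + 1 - k + l.1, by omega⟩)
        (by simp [Fin.mk_le_mk])
      have hYlt : Y < vlo i := lt_of_lt_of_le h1 hmono
      apply key
      have : R i < μf i X - Y := by
        have : Y < μf i X - R i := hYlt
        linarith
      calc R i < μf i X - Y := this
        _ ≤ |μf i X - Y| := le_abs_self _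
        _ = |Y - μf i X| := abs_sub_comm _ _
    have hinj : Set.InjOn
        (fun l : Fin k => Fin.castSucc (Tuple.sort vlo ⟨m + 1 - k + l.1, by omega⟩))
        (Finset.univ : Finset (Fin k)) := by
      intro a _ b _ hab
      simp only at hab
      have := (Tuple.sort vlo).injective (Fin.castSucc_injective _ hab)
      rw [Fin.mk.injEq] at this
      exact Fin.ext (by omega)
    have := Finset.card_le_card_of_injOn _ (fun l _ => hbig l) hinj
    simpa [outdeg] using this
  · -- Y above the upper endpoint
    rw [not_le] at h2
    by_cases hkm : k ≤ m + 1
    swap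
    · rw [kthSmallestE, dif_neg hkm] at h2
      exact absurd h2 (by simp)
    set vhi : Fin (m + 1) → ℝ := fun i => μf i X + R i with hvhi
    rw [kthSmallestE, dif_pos hkm, EReal.coe_lt_coe_iff] at h2
    have hbig : ∀ l : Fin k,
        (Fin.castSucc (Tuple.sort vhi ⟨l.1, by omega⟩)) ∈ Finset.univ.filter
          (fun j => res2 A W j (Fin.last (m + 1)) < res2 A W (Fin.last (m + 1)) j) := by
      intro l
      set i := Tuple.sort vhi ⟨l.1, by omega⟩ with hi
      have hmono := Tuple.monotone_sort vhi
        (a := ⟨l.1, by omega⟩) (b := ⟨k - 1, by omega⟩)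
        (by simp [Fin.mk_le_mk]; omega)
      have hYgt : vhi i < Y := lt_of_le_of_lt hmono h2
      apply key
      have : R i < Y - μf i X := by
        have : μf i X + R i < Y := hYgt
        linarith
      calc R i < Y - μf i X := this
        _ ≤ |Y - μf i X| := le_abs_self _
    have hinj : Set.InjOn
        (fun l : Fin k => Fin.castSucc (Tuple.sort vhi ⟨l.1, by omega⟩))
        (Finset.univ : Finset (Fin k)) := by
      intro a _ b _ hab
      simp only at hab
      have := (Tuple.sort vhi).injective (Fin.castSucc_injective _ hab)
      rw [Fin.mk.injEq] at this
      exact Fin.ext this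
    have := Finset.card_le_card_of_injOn _ (fun l _ => hbig l) hinj
    simpa [outdeg] using this


end JKAux

open JKAux

/-- Coverage of the jackknife+ prediction interval: with `n = m + 1 ≥ 2` i.i.d. training
pairs plus an i.i.d. test pair (all indexed by `Fin (m + 2)`, the test pair being the
last one), a symmetric, jointly measurable training algorithm `A` on `n - 1 = m` pairs,
leave-one-out models `μ₋ᵢ` and residuals `Rᵢ = |Yᵢ - μ₋ᵢ(Xᵢ)|`, the jackknife+ interval
`[q̂⁻, q̂⁺]` (with `q̂⁺` the `⌈(1-α)(n+1)⌉`-th smallest of `μ₋ᵢ(X_{n+1}) + Rᵢ` and `q̂⁻` the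
`⌈(1-α)(n+1)⌉`-th largest of `μ₋ᵢ(X_{n+1}) - Rᵢ`) covers `Y_{n+1}` with probability at
least `1 - 2α`. -/
theorem jackknife_plus_coverage {d m : ℕ} (hm : 1 ≤ m) (α : ℝ) (hα : α ∈ Set.Ioo (0 : ℝ) 1)
    {Ω : Type*} [MeasurableSpace Ω] (P : Measure Ω) [IsProbabilityMeasure P]
    (V : Fin (m + 2) → Ω → ((Fin d → ℝ) × ℝ))
    (hVmeas : ∀ i, Measurable (V i))
    (hVindep : iIndepFun V P)
    (hVident : ∀ i j, Measure.map (V i) P = Measure.map (V j) P)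
    (A : (Fin m → ((Fin d → ℝ) × ℝ)) → (Fin d → ℝ) → ℝ)
    (hAmeas : Measurable fun q : (Fin m → ((Fin d → ℝ) × ℝ)) × (Fin d → ℝ) => A q.1 q.2)
    (hAsymm : ∀ (data : Fin m → ((Fin d → ℝ) × ℝ)) (σ : Equiv.Perm (Fin m)),
      A (data ∘ σ) = A data) :
    ENNReal.ofReal (1 - 2 * α) ≤
      P {ω |
          kthLargestE (Nat.le_add_left 1 m)
              (fun i : Fin (m + 1) =>
                looModel A (fun j => V j.castSucc ω) i (V (Fin.last (m + 1)) ω).1 -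
                  |(V i.castSucc ω).2 -
                    looModel A (fun j => V j.castSucc ω) i (V i.castSucc ω).1|)
              ⌈(1 - α) * ((m : ℝ) + 2)⌉₊
              (Nat.ceil_pos.mpr (mul_pos (by linarith [hα.2]) (by positivity))) ≤
            (((V (Fin.last (m + 1)) ω).2 : ℝ) : EReal) ∧
          (((V (Fin.last (m + 1)) ω).2 : ℝ) : EReal) ≤
            kthSmallestE (Nat.le_add_left 1 m)
              (fun i : Fin (m + 1) =>
                looModel A (fun j => V j.castSucc ω) i (V (Fin.last (m + 1)) ω).1 +
                  |(V i.castSucc ω).2 -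
                    looModel A (fun j => V j.castSucc ω) i (V i.castSucc ω).1|)
              ⌈(1 - α) * ((m : ℝ) + 2)⌉₊} := by
  classical
  set k : ℕ := ⌈(1 - α) * ((m : ℝ) + 2)⌉₊ with hkdef
  have hk1 : 1 ≤ k := Nat.ceil_pos.mpr (mul_pos (by linarith [hα.2]) (by positivity))
  set G : Set (Fin (m + 2) → ((Fin d → ℝ) × ℝ)) :=
    {W | k ≤ outdeg A W (Fin.last (m + 1))} with hG
  have hGmeas : MeasurableSet G := measurableSet_strange A hAmeas k _
  have hWmeas : ∀ σ : Equiv.Perm (Fin (m + 2)), Measurable fun ω l => V (σ l) ω := fun σ =>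
    measurable_pi_lambda _ fun l => hVmeas (σ l)
  set E : Fin (m + 2) → Set Ω := fun i => {ω | k ≤ outdeg A (fun l => V l ω) i} with hE
  have hEeq : ∀ i, E i =
      (fun ω l => V ((Equiv.swap (Fin.last (m + 1)) i) l) ω) ⁻¹' G := by
    intro i
    ext ω
    simp only [hE, hG, Set.mem_setOf_eq, Set.mem_preimage]
    rw [outdeg_perm A hAsymm (fun l => V l ω) (Equiv.swap (Fin.last (m + 1)) i)
      (Fin.last (m + 1)), Equiv.swap_apply_left]
  have hEmeas : ∀ i, MeasurableSet (E i) := fun i => by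
    rw [hEeq i]; exact (hWmeas _) hGmeas
  have hEP : ∀ i, P (E i) = P (E (Fin.last (m + 1))) := by
    intro i
    rw [hEeq i, hEeq (Fin.last (m + 1)),
      ← Measure.map_apply (hWmeas _) hGmeas, ← Measure.map_apply (hWmeas _) hGmeas,
      map_perm_tuple P V hVmeas hVindep hVident _,
      map_perm_tuple P V hVmeas hVindep hVident _]
  -- pointwise bound on the number of strange points
  have hcard : ∀ ω : Ω,
      (((Finset.univ.filter fun i : Fin (m + 2) =>
        k ≤ outdeg A (fun l => V l ω) i).card : ℝ)) ≤ 2 * α * ((m : ℝ) + 2) := by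
    intro ω
    set S := Finset.univ.filter fun i : Fin (m + 2) =>
      k ≤ outdeg A (fun l => V l ω) i with hSdef
    have hαpos := hα.1
    rcases S.eq_empty_or_nonempty with hS0 | hS0
    · rw [hS0]
      simp only [Finset.card_empty, Nat.cast_zero]
      positivity
    · have hb := tournament_bound (fun i j => res2 A (fun l => V l ω) i j) S
        (fun i hi => (Finset.mem_filter.mp hi).2) hS0
      have hceil : (1 - α) * ((m : ℝ) + 2) ≤ (k : ℝ) := Nat.le_ceil _
      have hbR : (S.card : ℝ) + 2 * (k : ℝ) + 1 ≤ 2 * ((m : ℝ) + 2) := by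
        exact_mod_cast hb
      linarith
  -- sum of the probabilities equals the integral of the count
  have hindmeas : ∀ i : Fin (m + 2), Measurable ((E i).indicator (1 : Ω → ℝ≥0∞)) :=
    fun i => measurable_const.indicator (hEmeas i)
  have hsum : ∑ i : Fin (m + 2), P (E i) ≤ ENNReal.ofReal (2 * α * ((m : ℝ) + 2)) := by
    have h1 : ∀ i : Fin (m + 2), P (E i) =
        ∫⁻ ω, (E i).indicator (1 : Ω → ℝ≥0∞) ω ∂P := by
      intro i
      rw [lintegral_indicator_one (hEmeas i)]
    calc ∑ i : Fin (m + 2), P (E i)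
        = ∑ i : Fin (m + 2), ∫⁻ ω, (E i).indicator (1 : Ω → ℝ≥0∞) ω ∂P :=
          Finset.sum_congr rfl fun i _ => h1 i
      _ = ∫⁻ ω, ∑ i : Fin (m + 2), (E i).indicator (1 : Ω → ℝ≥0∞) ω ∂P :=
          (lintegral_finset_sum _ fun i _ => hindmeas i).symm
      _ ≤ ∫⁻ _, ENNReal.ofReal (2 * α * ((m : ℝ) + 2)) ∂P := by
          apply lintegral_mono
          intro ω
          have h2 : (∑ i : Fin (m + 2), (E i).indicator (1 : Ω → ℝ≥0∞) ω) =
              ((Finset.univ.filter fun i : Fin (m + 2) =>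
                k ≤ outdeg A (fun l => V l ω) i).card : ℝ≥0∞) := by
            rw [Finset.card_filter, Nat.cast_sum]
            refine Finset.sum_congr rfl fun i _ => ?_
            rw [Set.indicator_apply]
            by_cases hω : ω ∈ E i
            · rw [if_pos hω, if_pos (by exact hω)]
              simp
            · rw [if_neg hω, if_neg (by exact hω)]
              simp
          refine le_trans (le_of_eq h2) ?_
          rw [← ENNReal.ofReal_natCast]
          exact ENNReal.ofReal_le_ofReal (hcard ω)
      _ = ENNReal.ofReal (2 * α * ((m : ℝ) + 2)) := by
          rw [lintegral_const, measure_univ, mul_one]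
  have hlastsum : ((m : ℝ≥0∞) + 2) * P (E (Fin.last (m + 1))) ≤
      ENNReal.ofReal (2 * α * ((m : ℝ) + 2)) := by
    calc ((m : ℝ≥0∞) + 2) * P (E (Fin.last (m + 1)))
        = ∑ _i : Fin (m + 2), P (E (Fin.last (m + 1))) := by
          rw [Finset.sum_const, Finset.card_univ, Fintype.card_fin, nsmul_eq_mul]
          norm_cast
      _ = ∑ i : Fin (m + 2), P (E i) := (Finset.sum_congr rfl fun i _ => (hEP i)).symm
      _ ≤ _ := hsum
  have hPE : P (E (Fin.last (m + 1))) ≤ ENNReal.ofReal (2 * α) := by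
    have h22 : ENNReal.ofReal (2 * α * ((m : ℝ) + 2)) =
        ((m : ℝ≥0∞) + 2) * ENNReal.ofReal (2 * α) := by
      rw [mul_comm (2 * α) ((m : ℝ) + 2), ENNReal.ofReal_mul (by positivity)]
      congr 1
      rw [show ((m : ℝ) + 2) = ((m + 2 : ℕ) : ℝ) by push_cast; ring, ENNReal.ofReal_natCast]
      push_cast
      ring
    rw [h22] at hlastsum
    refine (ENNReal.mul_le_mul_iff_right ?_ ?_).mp hlastsum
    · simp
    · simp [ENNReal.add_ne_top]
  have hsubset : (E (Fin.last (m + 1)))ᶜ ⊆ {ω |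
          kthLargestE (Nat.le_add_left 1 m)
              (fun i : Fin (m + 1) =>
                looModel A (fun j => V j.castSucc ω) i (V (Fin.last (m + 1)) ω).1 -
                  |(V i.castSucc ω).2 -
                    looModel A (fun j => V j.castSucc ω) i (V i.castSucc ω).1|)
              k hk1 ≤
            (((V (Fin.last (m + 1)) ω).2 : ℝ) : EReal) ∧
          (((V (Fin.last (m + 1)) ω).2 : ℝ) : EReal) ≤
            kthSmallestE (Nat.le_add_left 1 m)
              (fun i : Fin (m + 1) =>
                looModel A (fun j => V j.castSucc ω) i (V (Fin.last (m + 1)) ω).1 +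
                  |(V i.castSucc ω).2 -
                    looModel A (fun j => V j.castSucc ω) i (V i.castSucc ω).1|)
              k} := by
    intro ω hω
    by_contra hcon
    exact hω (noncover_strange A (fun l => V l ω) k hk1 hcon)
  calc ENNReal.ofReal (1 - 2 * α)
      ≤ 1 - ENNReal.ofReal (2 * α) := by
        rw [← ENNReal.ofReal_one, ← ENNReal.ofReal_sub _ (by nlinarith [hα.1] : (0:ℝ) ≤ 2 * α)]
    _ ≤ 1 - P (E (Fin.last (m + 1))) := tsub_le_tsub_left hPE 1
    _ = P (E (Fin.last (m + 1)))ᶜ := (prob_compl_eq_one_sub (hEmeas _)).symm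
    _ ≤ _ := measure_mono hsubset
end
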